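/- Let F_2 × F_2 be the direct product of two free groups of rank 2, with bases x_1, y_1 and x_2, y_2 respectively, and let B = { x_1 x_2^{-1}, y_1 y_2^{-1}, [x_1, y_1] } (where x_1, y_1, x_2, y_2 denote the images in the product and [x,y] = xyx^{-1}y^{-1}). For n ≥ 1 let h_n = [x_1^n, y_1^n] ∈ F_2 × F_2. Then every product of elements of B ∪ B^{-1} which equals h_n has at least n² factors, i.e., d_B(1, h_n) ≥ n²; on the other hand h_n has word length at most 4n with respect to the generating set {x_1, y_1, x_2, y_2} of F_2 × F_2. In particular the subgroup generated by B (which is K^2_2(2)) is at least quadratically distorted in F_2 × F_2. -/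

import Mathlib

open scoped commutatorElement

/-- `x_1 = (x, 1)` in `F_2 × F_2`. -/
def x1 : FreeGroup (Fin 2) × FreeGroup (Fin 2) := (FreeGroup.of 0, 1)
/-- `y_1 = (y, 1)` in `F_2 × F_2`. -/
def y1 : FreeGroup (Fin 2) × FreeGroup (Fin 2) := (FreeGroup.of 1, 1)
/-- `x_2 = (1, x)` in `F_2 × F_2`. -/
def x2 : FreeGroup (Fin 2) × FreeGroup (Fin 2) := (1, FreeGroup.of 0)
/-- `y_2 = (1, y)` in `F_2 × F_2`. -/
def y2 : FreeGroup (Fin 2) × FreeGroup (Fin 2) := (1, FreeGroup.of 1)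

/-- The generating set `B = {x_1 x_2⁻¹, y_1 y_2⁻¹, [x_1, y_1]}` of `K^2_2(2)`. -/
def Bset : Set (FreeGroup (Fin 2) × FreeGroup (Fin 2)) :=
  {x1 * x2⁻¹, y1 * y2⁻¹, ⁅x1, y1⁆}

/-- The element `h_n = [x_1^n, y_1^n]` of `F_2 × F_2`. -/
def hElt (n : ℕ) : FreeGroup (Fin 2) × FreeGroup (Fin 2) := ⁅x1 ^ n, y1 ^ n⁆

/-! Map `F_2` to the integer Heisenberg group by `x ↦ X`, `y ↦ Y`. For `g = (g_1, g_2)` in `K`, the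
`X`- and `Y`-exponents of the images of `g_1` and `g_2` cancel, and on such pairs the difference of
the central coordinates, `area g`, is additive. Every element of `B ∪ B⁻¹` has `|area| ≤ 1`, so a
product of `L` of them has `|area| ≤ L`, while `area h_n = n²` because `⁅X^n, Y^n⁆` is the
`n²`-th power of the central generator. -/

/-- The integer Heisenberg group: `⟨x, y, z⟩` stands for the matrix `[[1,x,z],[0,1,y],[0,0,1]]`. -/
@[ext] structure Heis where
  x : ℤ
  y : ℤ
  z : ℤ

namespace Heis

instance : Mul Heis := ⟨fun a b => ⟨a.x + b.x, a.y + b.y, a.z + b.z + a.x * b.y⟩⟩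
instance : One Heis := ⟨⟨0, 0, 0⟩⟩
instance : Inv Heis := ⟨fun a => ⟨-a.x, -a.y, -a.z + a.x * a.y⟩⟩

@[simp] lemma mul_x (a b : Heis) : (a * b).x = a.x + b.x := rfl
@[simp] lemma mul_y (a b : Heis) : (a * b).y = a.y + b.y := rfl
@[simp] lemma mul_z (a b : Heis) : (a * b).z = a.z + b.z + a.x * b.y := rfl
@[simp] lemma one_x : (1 : Heis).x = 0 := rfl
@[simp] lemma one_y : (1 : Heis).y = 0 := rfl
@[simp] lemma one_z : (1 : Heis).z = 0 := rfl
@[simp] lemma inv_x (a : Heis) : a⁻¹.x = -a.x := rfl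
@[simp] lemma inv_y (a : Heis) : a⁻¹.y = -a.y := rfl
@[simp] lemma inv_z (a : Heis) : a⁻¹.z = -a.z + a.x * a.y := rfl

instance : Group Heis where
  mul_assoc a b c := by ext <;> simp only [mul_x, mul_y, mul_z] <;> ring
  one_mul a := by ext <;> simp
  mul_one a := by ext <;> simp
  inv_mul_cancel a := by
    ext <;> simp only [mul_x, mul_y, mul_z, inv_x, inv_y, inv_z, one_x, one_y, one_z] <;> ring

def X : Heis := ⟨1, 0, 0⟩
def Y : Heis := ⟨0, 1, 0⟩

lemma X_pow (n : ℕ) : X ^ n = ⟨n, 0, 0⟩ := by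
  induction n with
  | zero => rfl
  | succ k ih => rw [pow_succ, ih]; ext <;> simp [X]

lemma Y_pow (n : ℕ) : Y ^ n = ⟨0, n, 0⟩ := by
  induction n with
  | zero => rfl
  | succ k ih => rw [pow_succ, ih]; ext <;> simp [Y]

lemma commutator_X_pow_Y_pow (m n : ℕ) : ⁅X ^ m, Y ^ n⁆ = ⟨0, 0, m * n⟩ := by
  ext <;> simp [commutatorElement_def, X_pow, Y_pow]

end Heis

open Heis

def toHeis : FreeGroup (Fin 2) →* Heis := FreeGroup.lift ![X, Y]

/-- The subgroup `K^2_2(2)`, described through the abelianisation `Heis → ℤ²`. -/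
def balanced : Subgroup (FreeGroup (Fin 2) × FreeGroup (Fin 2)) where
  carrier := {g | (toHeis g.1).x + (toHeis g.2).x = 0 ∧ (toHeis g.1).y + (toHeis g.2).y = 0}
  mul_mem' {a b} ha hb := by
    simp only [Set.mem_ofPred_eq, Prod.fst_mul, Prod.snd_mul, map_mul, mul_x, mul_y] at *
    constructor <;> linarith [ha.1, ha.2, hb.1, hb.2]
  one_mem' := by simp
  inv_mem' {a} ha := by
    simp only [Set.mem_ofPred_eq, Prod.fst_inv, Prod.snd_inv, map_inv, inv_x, inv_y] at *
    constructor <;> linarith [ha.1, ha.2]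

def area (g : FreeGroup (Fin 2) × FreeGroup (Fin 2)) : ℤ :=
  (toHeis g.1).z - (toHeis g.2).z

lemma area_mul {a b : FreeGroup (Fin 2) × FreeGroup (Fin 2)} (ha : a ∈ balanced)
    (hb : b ∈ balanced) : area (a * b) = area a + area b := by
  have hx : (toHeis a.2).x = -(toHeis a.1).x := by linarith [ha.1]
  have hy : (toHeis b.2).y = -(toHeis b.1).y := by linarith [hb.2]
  simp only [area, Prod.fst_mul, Prod.snd_mul, map_mul, mul_z, hx, hy]
  ring

lemma Bset_subset_balanced : Bset ⊆ balanced := by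
  rintro b (rfl | rfl | rfl) <;>
    simp [balanced, x1, x2, y1, y2, commutatorElement_def, toHeis, X, Y]

lemma abs_area_le_one_of_mem_Bset {b} (hb : b ∈ Bset) : |area b| ≤ 1 := by
  rcases hb with rfl | rfl | rfl <;>
    simp [area, x1, x2, y1, y2, commutatorElement_def, toHeis, X, Y]

lemma area_hElt (n : ℕ) : area (hElt n) = n ^ 2 := by
  have h₁ : (hElt n).1 = ⁅FreeGroup.of (0 : Fin 2) ^ n, FreeGroup.of 1 ^ n⁆ := by
    simp [hElt, x1, y1, commutatorElement_def]
  have h₂ : (hElt n).2 = 1 := by simp [hElt, x1, y1, commutatorElement_def]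
  simp [area, h₁, h₂, map_commutatorElement, toHeis, commutator_X_pow_Y_pow, sq]

theorem abs_list_prod_le_length {G : Type*} [Group G] {K : Subgroup G} {μ : G → ℤ}
    (hμ : ∀ a ∈ K, ∀ b ∈ K, μ (a * b) = μ a + μ b) {S : Set G} (hSK : S ⊆ K)
    (hSμ : ∀ s ∈ S, |μ s| ≤ 1) {l : List G} (hl : ∀ a ∈ l, a ∈ S ∪ S⁻¹) :
    |μ l.prod| ≤ l.length := by
  have hμ_one : μ 1 = 0 := by simpa using hμ 1 K.one_mem 1 K.one_mem
  have hμ_inv : ∀ a ∈ K, μ a⁻¹ = -μ a := fun a ha => by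
    have := hμ a ha a⁻¹ (K.inv_mem ha)
    rw [mul_inv_cancel, hμ_one] at this
    linarith
  have hgen : ∀ a ∈ S ∪ S⁻¹, a ∈ K ∧ |μ a| ≤ 1 := by
    rintro a (ha | ha)
    · exact ⟨hSK ha, hSμ a ha⟩
    · have haK : a ∈ K := K.inv_mem_iff.mp (hSK ha)
      exact ⟨haK, by simpa [hμ_inv a haK] using hSμ _ ha⟩
  suffices l.prod ∈ K ∧ |μ l.prod| ≤ l.length from this.2
  induction l with
  | nil => simp [hμ_one, K.one_mem]
  | cons a t ih =>
    obtain ⟨haK, haμ⟩ := hgen a (hl a List.mem_cons_self)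
    obtain ⟨htK, htμ⟩ := ih fun b hb => hl b (List.mem_cons_of_mem a hb)
    refine ⟨K.mul_mem haK htK, ?_⟩
    rw [List.prod_cons, hμ a haK _ htK, List.length_cons, Nat.cast_succ]
    linarith [abs_add_le (μ a) (μ t.prod)]

def hWord (n : ℕ) : List (FreeGroup (Fin 2) × FreeGroup (Fin 2)) :=
  List.replicate n x1 ++ List.replicate n y1 ++ List.replicate n x1⁻¹ ++ List.replicate n y1⁻¹

lemma prod_hWord (n : ℕ) : (hWord n).prod = hElt n := by
  simp [hWord, hElt, commutatorElement_def, mul_assoc]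

lemma length_hWord (n : ℕ) : (hWord n).length = 4 * n := by
  simp only [hWord, List.length_append, List.length_replicate]
  ring

lemma mem_hWord {n : ℕ} {a} (ha : a ∈ hWord n) : a = x1 ∨ a = y1 ∨ a = x1⁻¹ ∨ a = y1⁻¹ := by
  simp only [hWord, List.mem_append, List.mem_replicate] at ha
  tauto

theorem distortion_of_K22_general (n : ℕ) :
    (∀ (L : ℕ) (f : Fin L → FreeGroup (Fin 2) × FreeGroup (Fin 2)),
      (∀ i, f i ∈ Bset ∪ Bset⁻¹) → (List.ofFn f).prod = hElt n → n ^ 2 ≤ L) ∧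
    (∃ L ≤ 4 * n, ∃ f : Fin L → FreeGroup (Fin 2) × FreeGroup (Fin 2),
      (∀ i, f i ∈ ({x1, y1, x2, y2} : Set (FreeGroup (Fin 2) × FreeGroup (Fin 2))) ∪
        ({x1, y1, x2, y2} : Set (FreeGroup (Fin 2) × FreeGroup (Fin 2)))⁻¹) ∧
      (List.ofFn f).prod = hElt n) := by
  constructor
  · intro L f hf hprod
    have hbound := abs_list_prod_le_length (fun a ha b hb => area_mul ha hb)
      Bset_subset_balanced (fun _ => abs_area_le_one_of_mem_Bset)
      (l := List.ofFn f) (by simpa [List.mem_ofFn] using hf)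
    rw [hprod, area_hElt, List.length_ofFn] at hbound
    exact_mod_cast (le_abs_self _).trans hbound
  · refine ⟨_, (length_hWord n).le, (hWord n).get, fun i => ?_, by rw [List.ofFn_get, prod_hWord]⟩
    rcases mem_hWord (List.get_mem _ i) with h | h | h | h <;> rw [h] <;> simp

/-- For `n ≥ 1`, every product of elements of `B ∪ B⁻¹` equal to `h_n = [x_1^n, y_1^n]` has
at least `n²` factors (i.e. `d_B(1, h_n) ≥ n²`), whereas `h_n` has word length at most `4n`
with respect to the generating set `{x_1, y_1, x_2, y_2}` of `F_2 × F_2`.  In particular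
the subgroup `K^2_2(2)` generated by `B` is at least quadratically distorted in
`F_2 × F_2`. -/
theorem distortion_of_K22 (n : ℕ) (hn : 1 ≤ n) :
    (∀ (L : ℕ) (f : Fin L → FreeGroup (Fin 2) × FreeGroup (Fin 2)),
      (∀ i, f i ∈ Bset ∪ Bset⁻¹) → (List.ofFn f).prod = hElt n → n ^ 2 ≤ L) ∧
    (∃ L ≤ 4 * n, ∃ f : Fin L → FreeGroup (Fin 2) × FreeGroup (Fin 2),
      (∀ i, f i ∈ ({x1, y1, x2, y2} : Set (FreeGroup (Fin 2) × FreeGroup (Fin 2))) ∪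
        ({x1, y1, x2, y2} : Set (FreeGroup (Fin 2) × FreeGroup (Fin 2)))⁻¹) ∧
      (List.ofFn f).prod = hElt n) :=
  distortion_of_K22_general n
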